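/- arXiv:q-alg/9603025 — 3 statements merged into one kernel-verified Lean document; each statement's English description precedes it below -/
import Mathlib

section
/- Let k be a positive integer and 0 ≤ κ ≤ k, κ' = k − κ. Suppose g : ℤ → Q(q) satisfies g(t) = δ_{t,0} for t ≤ 0 and, for every t ≥ 0, ∑_{α∈ℤ} (−q^{k+1})^α [k choose α]_q · g(t−α) = (q^{k+2})^t [κ choose t]_q [κ' choose t]_q − (q^{k+2})^{t−1} [κ choose t−1]_q [κ' choose t−1]_q. Then, as formal power series in w over Q(q), (∑_{t≥0} g(t) w^t) · ∏_{j=1}^{k} (1 − q^{2j} w) = (1 − w) · ∑_{t≥0} (q^{k+2} w)^t [κ choose t]_q [κ' choose t]_q. -/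
noncomputable section

/-- The field `ℚ(q)` of rational functions over `ℚ`. -/
abbrev K : Type := RatFunc ℚ

/-- The indeterminate `q`. -/
def q : K := RatFunc.X

/-- The balanced quantum integer `[m] = (q^m - q^{-m})/(q - q⁻¹)`. -/
def qint (m : ℤ) : K := (q ^ m - q ^ (-m)) / (q - q⁻¹)

/-- The q-factorial `[n]! = [n][n-1]⋯[1]`. -/
def qfact : ℕ → K
  | 0 => 1
  | n + 1 => qint ((n : ℤ) + 1) * qfact n

/-- The Gaussian binomial coefficient (natural lower index). -/
def qbin (n j : ℕ) : K :=
  if j ≤ n then qfact n / (qfact j * qfact (n - j)) else 0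

/-- The Gaussian binomial coefficient with integer lower index,
vanishing unless `0 ≤ j ≤ n`. -/
def qbinZ (n : ℕ) (j : ℤ) : K :=
  if 0 ≤ j ∧ j ≤ (n : ℤ) then qfact n / (qfact j.toNat * qfact (n - j.toNat)) else 0

lemma hq0 : q ≠ 0 := RatFunc.X_ne_zero

lemma q_pow_ne_one {n : ℕ} (hn : n ≠ 0) : q ^ n ≠ 1 := by
  intro h
  have h2 : (Polynomial.X : Polynomial ℚ) ^ n = 1 := by
    apply RatFunc.algebraMap_injective ℚ
    rw [map_pow, map_one, RatFunc.algebraMap_X]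
    exact h
  have := congrArg Polynomial.natDegree h2
  simp [Polynomial.natDegree_X_pow] at this
  exact hn this

lemma q_zpow_ne_one {n : ℤ} (hn : n ≠ 0) : q ^ n ≠ 1 := by
  rcases lt_or_gt_of_ne hn with h | h
  · intro he
    have : q ^ (-n) = 1 := by rw [zpow_neg, he, inv_one]
    rw [show (-n) = ((-n).toNat : ℤ) by omega, zpow_natCast] at this
    exact q_pow_ne_one (by omega) this
  · intro he
    rw [show n = (n.toNat : ℤ) by omega, zpow_natCast] at he
    exact q_pow_ne_one (by omega) he

lemma hden : q - q⁻¹ ≠ 0 := by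
  intro h
  have h2 : q ^ (2:ℤ) = 1 := by
    have : q * q = q * q⁻¹ := by rw [sub_eq_zero] at h; rw [← h]
    rw [mul_inv_cancel₀ hq0] at this
    rw [zpow_two]; exact this
  exact q_zpow_ne_one (by norm_num) h2

lemma qint_ne_zero {m : ℤ} (hm : m ≠ 0) : qint m ≠ 0 := by
  unfold qint
  apply div_ne_zero _ hden
  intro h
  rw [sub_eq_zero] at h
  have h1 : q ^ (2*m) = 1 := by
    have := congrArg (· * q ^ m) h
    rw [← zpow_add₀ hq0, ← zpow_add₀ hq0] at this
    simpa [two_mul] using this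
  exact q_zpow_ne_one (by omega) h1

lemma qint_add (a b : ℤ) : qint (a + b) = q ^ (-b) * qint a + q ^ a * qint b := by
  have key : q^(a+b) - q^(-(a+b)) = q^(-b)*(q^a - q^(-a)) + q^a*(q^b - q^(-b)) := by
    rw [neg_add, zpow_add₀ hq0 a b, zpow_add₀ hq0 (-a) (-b)]
    ring
  unfold qint
  rw [← mul_div_assoc, ← mul_div_assoc, ← add_div]
  rw [key]

lemma qfact_succ (n : ℕ) : qfact (n + 1) = qint ((n : ℤ) + 1) * qfact n := rfl

lemma qfact_ne_zero (n : ℕ) : qfact n ≠ 0 := by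
  induction n with
  | zero => simp [qfact]
  | succ n ih => exact mul_ne_zero (qint_ne_zero (by omega)) ih

lemma qbin_pascal (n j : ℕ) : qbin (n + 1) (j + 1)
    = q ^ (-((j : ℤ) + 1)) * qbin n (j + 1) + q ^ ((n : ℤ) - j) * qbin n j := by
  by_cases h1 : j + 1 ≤ n
  · obtain ⟨m, rfl⟩ : ∃ m, n = j + 1 + m := ⟨n - (j + 1), by omega⟩
    simp only [qbin, if_pos (by omega : j + 1 ≤ j + 1 + m + 1),
      if_pos (by omega : j + 1 ≤ j + 1 + m), if_pos (by omega : j ≤ j + 1 + m),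
      show j + 1 + m + 1 - (j + 1) = m + 1 by omega,
      show j + 1 + m - (j + 1) = m by omega,
      show j + 1 + m - j = m + 1 by omega,
      show ((j + 1 + m : ℕ) : ℤ) - (j : ℤ) = (m : ℤ) + 1 by push_cast; ring]
    rw [show j + 1 + m + 1 = (j + 1 + m) + 1 by ring, qfact_succ (j + 1 + m),
      qfact_succ j, qfact_succ m]
    have key : qint (((j + 1 + m : ℕ) : ℤ) + 1)
        = q ^ (-((j : ℤ) + 1)) * qint ((m : ℤ) + 1) + q ^ ((m : ℤ) + 1) * qint ((j : ℤ) + 1) := by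
      rw [← qint_add ((m : ℤ) + 1) ((j : ℤ) + 1)]
      congr 1
      push_cast; ring
    rw [key, zpow_neg]
    have hj : qint ((j : ℤ) + 1) ≠ 0 := qint_ne_zero (by omega)
    have hm : qint ((m : ℤ) + 1) ≠ 0 := qint_ne_zero (by omega)
    have hp : q ^ ((j : ℤ) + 1) ≠ 0 := zpow_ne_zero _ hq0
    have hfj := qfact_ne_zero j
    have hfm := qfact_ne_zero m
    set a := qint ((j : ℤ) + 1) with ha
    set b := qint ((m : ℤ) + 1) with hb
    set u := q ^ ((j : ℤ) + 1) with hu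
    set v := q ^ ((m : ℤ) + 1) with hv
    set F := qfact (j + 1 + m) with hF
    set fj := qfact j with hfj'
    set fm := qfact m with hfm'
    clear_value a b u v F fj fm
    field_simp [hj, hm, hp, hfj, hfm]
  · by_cases h2 : j ≤ n
    · have : j = n := by omega
      subst this
      simp only [qbin, if_pos (le_refl (j + 1)), if_neg (by omega : ¬ j + 1 ≤ j),
        if_pos (le_refl j), Nat.sub_self, qfact]
      rw [show ((j : ℤ) - j) = 0 by ring]
      simp only [mul_one, zpow_zero, one_mul, mul_zero, zero_add, qfact_succ]
      rw [div_self (mul_ne_zero (qint_ne_zero (by omega)) (qfact_ne_zero j)),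
        div_self (qfact_ne_zero j)]
    · simp [qbin, if_neg (by omega : ¬ j + 1 ≤ n + 1), if_neg (by omega : ¬ j + 1 ≤ n),
        if_neg (by omega : ¬ j ≤ n)]
      exact fun h => absurd h (by omega)

lemma pow_e1 (k j : ℕ) : (-(q ^ (k + 2))) ^ (j + 1) * q ^ (-((j : ℤ) + 1))
    = (-(q ^ (k + 1))) ^ (j + 1) := by
  rw [neg_pow (q ^ (k + 2)) (j + 1), neg_pow (q ^ (k + 1)) (j + 1), mul_assoc]
  congr 1
  rw [← pow_mul, ← pow_mul, ← zpow_natCast q ((k + 2) * (j + 1)),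
    ← zpow_natCast q ((k + 1) * (j + 1)), ← zpow_add₀ hq0]
  congr 1
  push_cast; ring

lemma pow_e2 (k j : ℕ) : (-(q ^ (k + 2))) ^ (j + 1) * q ^ ((k : ℤ) - j)
    = -(q ^ (2 * (k + 1)) * (-(q ^ (k + 1))) ^ j) := by
  rw [neg_pow (q ^ (k + 2)) (j + 1), neg_pow (q ^ (k + 1)) j]
  have h : (q ^ (k + 2)) ^ (j + 1) * q ^ ((k : ℤ) - j)
      = q ^ (2 * (k + 1)) * (q ^ (k + 1)) ^ j := by
    rw [← pow_mul, ← pow_mul, ← zpow_natCast q ((k + 2) * (j + 1)), ← zpow_add₀ hq0,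
      ← zpow_natCast q (2 * (k + 1)), ← zpow_natCast q ((k + 1) * j), ← zpow_add₀ hq0]
    congr 1
    push_cast; ring
  calc (-1 : K) ^ (j + 1) * (q ^ (k + 2)) ^ (j + 1) * q ^ ((k : ℤ) - j)
      = (-1) ^ (j + 1) * ((q ^ (k + 2)) ^ (j + 1) * q ^ ((k : ℤ) - j)) := by ring
    _ = (-1) ^ (j + 1) * (q ^ (2 * (k + 1)) * (q ^ (k + 1)) ^ j) := by rw [h]
    _ = -(q ^ (2 * (k + 1)) * ((-1) ^ j * (q ^ (k + 1)) ^ j)) := by ring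

lemma coeff_rec (k j : ℕ) : (-(q ^ (k + 2))) ^ (j + 1) * qbin (k + 1) (j + 1)
    = (-(q ^ (k + 1))) ^ (j + 1) * qbin k (j + 1)
      - q ^ (2 * (k + 1)) * ((-(q ^ (k + 1))) ^ j * qbin k j) := by
  rw [qbin_pascal, mul_add, ← mul_assoc, ← mul_assoc, pow_e1, pow_e2]
  ring

lemma qbin_of_gt {n j : ℕ} (h : n < j) : qbin n j = 0 := if_neg (by omega)

lemma qbin_zero (n : ℕ) : qbin n 0 = 1 := by
  simp only [qbin, if_pos (Nat.zero_le n), Nat.sub_zero, qfact, one_mul]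
  exact div_self (qfact_ne_zero n)

lemma coeff_prod (k : ℕ) (j : ℕ) :
    PowerSeries.coeff j (∏ i ∈ Finset.range k,
        (1 - PowerSeries.C (q ^ (2 * (i + 1))) * PowerSeries.X))
      = (-(q ^ (k + 1))) ^ j * qbin k j := by
  induction k generalizing j with
  | zero =>
    rw [Finset.range_zero, Finset.prod_empty, PowerSeries.coeff_one]
    rcases j with _ | j
    · simp [qbin_zero]
    · simp [qbin_of_gt (by omega : 0 < j + 1)]
  | succ k ih =>
    rw [Finset.prod_range_succ, mul_sub, mul_one, map_sub]
    have hc : (∏ i ∈ Finset.range k,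
          (1 - PowerSeries.C (q ^ (2 * (i + 1))) * PowerSeries.X))
          * (PowerSeries.C (q ^ (2 * (k + 1))) * PowerSeries.X)
        = PowerSeries.C (q ^ (2 * (k + 1)))
          * ((∏ i ∈ Finset.range k,
              (1 - PowerSeries.C (q ^ (2 * (i + 1))) * PowerSeries.X)) * PowerSeries.X) := by
      ring
    rw [hc, PowerSeries.coeff_C_mul]
    rcases j with _ | j
    · rw [PowerSeries.coeff_zero_mul_X, ih 0]
      simp [qbin_zero]
    · rw [PowerSeries.coeff_succ_mul_X, ih, ih]
      exact (coeff_rec k j).symm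

lemma qbinZ_natCast (n t : ℕ) : qbinZ n (t : ℤ) = qbin n t := by
  unfold qbinZ qbin
  by_cases h : t ≤ n
  · rw [if_pos ⟨Int.natCast_nonneg t, by exact_mod_cast h⟩, if_pos h, Int.toNat_natCast]
  · rw [if_neg (fun hp => h (by exact_mod_cast hp.2)), if_neg h]

lemma qbinZ_neg (n : ℕ) {j : ℤ} (h : j < 0) : qbinZ n j = 0 := if_neg (by omega)

lemma zq_pow (k t : ℕ) : q ^ (((k : ℤ) + 2) * t) = (q ^ (k + 2)) ^ t := by
  rw [← pow_mul, ← zpow_natCast q ((k + 2) * t)]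
  congr 1

set_option linter.unusedVariables false in
/-- Level-`k` `A^{(1)}_1` two-point function: if `g(t) = δ_{t,0}` for `t ≤ 0` and
`∑_α (−q^{k+1})^α [k choose α] g(t−α)
  = (q^{k+2})^t [κ choose t][κ' choose t] − (q^{k+2})^{t−1} [κ choose t−1][κ' choose t−1]`
for all `t ≥ 0`, then
`(∑_{t≥0} g(t)w^t) ∏_{j=1}^k (1 − q^{2j}w)
  = (1 − w) ∑_{t≥0} (q^{k+2}w)^t [κ choose t][κ' choose t]`. -/
theorem a11_levelk_two_point (k κ : ℕ) (hk : 0 < k) (hκ : κ ≤ k) (g : ℤ → K)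
    (hzero : ∀ t : ℤ, t ≤ 0 → g t = if t = 0 then 1 else 0)
    (hrec : ∀ t : ℤ, 0 ≤ t →
      ∑ α ∈ Finset.range (k + 1), (-(q ^ (k + 1))) ^ α * qbin k α * g (t - α)
        = q ^ (((k : ℤ) + 2) * t) * qbinZ κ t * qbinZ (k - κ) t
          - q ^ (((k : ℤ) + 2) * (t - 1)) * qbinZ κ (t - 1) * qbinZ (k - κ) (t - 1)) :
    (PowerSeries.mk (fun t : ℕ => g t))
        * ∏ j ∈ Finset.range k, (1 - PowerSeries.C (q ^ (2 * (j + 1))) * PowerSeries.X)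
      = (1 - PowerSeries.X)
        * PowerSeries.mk (fun t : ℕ => (q ^ (k + 2)) ^ t * qbin κ t * qbin (k - κ) t) := by
  apply PowerSeries.ext
  intro t
  set F : ℕ → K := fun α => (-(q ^ (k + 1))) ^ α * qbin k α * g ((t : ℤ) - α) with hF
  have hL : PowerSeries.coeff t ((PowerSeries.mk (fun t : ℕ => g t))
        * ∏ j ∈ Finset.range k, (1 - PowerSeries.C (q ^ (2 * (j + 1))) * PowerSeries.X))
      = ∑ α ∈ Finset.range (t + 1), F α := by
    rw [PowerSeries.coeff_mul, Finset.Nat.sum_antidiagonal_eq_sum_range_succ_mk]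
    rw [← Finset.sum_range_reflect]
    refine Finset.sum_congr rfl fun j hj => ?_
    have hjt : j ≤ t := by simpa [Nat.lt_succ_iff] using hj
    simp only [PowerSeries.coeff_mk, coeff_prod, hF]
    rw [show t + 1 - 1 - j = t - j by omega, show t - (t - j) = j by omega,
      show ((t - j : ℕ) : ℤ) = (t : ℤ) - j by omega]
    ring
  have hsub1 : ∑ α ∈ Finset.range (t + 1), F α = ∑ α ∈ Finset.range (k + t + 1), F α := by
    apply Finset.sum_subset (by apply Finset.range_subset_range.2; omega)
    intro x _ hx
    have hx' : t < x := by simpa [Nat.lt_succ_iff] using hx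
    have : g ((t : ℤ) - x) = 0 := by
      rw [hzero _ (by omega), if_neg (by omega)]
    simp [hF, this]
  have hsub2 : ∑ α ∈ Finset.range (k + 1), F α = ∑ α ∈ Finset.range (k + t + 1), F α := by
    apply Finset.sum_subset (by apply Finset.range_subset_range.2; omega)
    intro x _ hx
    have hx' : k < x := by simpa [Nat.lt_succ_iff] using hx
    simp [hF, qbin_of_gt hx']
  have hR := hrec (t : ℤ) (Int.natCast_nonneg t)
  rw [hL, hsub1, ← hsub2]
  have hid : ∑ α ∈ Finset.range (k + 1), F α
      = ∑ α ∈ Finset.range (k + 1), (-(q ^ (k + 1))) ^ α * qbin k α * g ((t : ℤ) - α) := rfl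
  rw [hid, hR]
  -- now handle RHS coefficient
  rw [sub_mul, one_mul, map_sub]
  rw [PowerSeries.coeff_mk, zq_pow, qbinZ_natCast, qbinZ_natCast]
  rcases t with _ | t'
  · rw [PowerSeries.coeff_zero_X_mul]
    rw [qbinZ_neg _ (by norm_num : ((0:ℕ) : ℤ) - 1 < 0)]
    ring
  · rw [PowerSeries.coeff_succ_X_mul, PowerSeries.coeff_mk]
    rw [show ((t' + 1 : ℕ) : ℤ) - 1 = (t' : ℤ) by push_cast; ring, zq_pow, qbinZ_natCast,
      qbinZ_natCast]
end
end

section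
/- Let p, ξ, w be formal variables and define γ_m = m(1 + ξ^m)/(1 − 2p^m − ξ^m) for even m > 0 and γ_m = m for odd m > 0. Then exp(−∑_{m≥1} w^m / γ_m) = (1 − w) · (ξ⁴w²; ξ⁴)_∞ (p²ξ²w²; ξ⁴)_∞ / ((ξ²w²; ξ⁴)_∞ (p²w²; ξ⁴)_∞), where (a; x)_∞ = ∏_{j≥0}(1 − a x^j). -/
/-- The q-Pochhammer infinite product `(a; x)_∞ = ∏_{j≥0} (1 − a x^j)`. -/
noncomputable def poch (a x : ℂ) : ℂ := ∏' j : ℕ, (1 - a * x ^ j)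

/-- The boson commutator `γ_m` for level-1 `D^{(2)}_{n+1}`:
`γ_m = m(1 + ξ^m)/(1 − 2p^m − ξ^m)` for even `m`, and `γ_m = m` for odd `m`. -/
noncomputable def gam (p ξ : ℂ) (m : ℕ) : ℂ :=
  if Even m then (m : ℂ) * (1 + ξ ^ m) / (1 - 2 * p ^ m - ξ ^ m) else (m : ℂ)

open Complex

private noncomputable def aa (p ξ w : ℂ) (q : ℕ × ℕ) : ℂ :=
  (-1) ^ q.2 * ((w ^ 2 * (ξ ^ 2) ^ (q.2 + 1)) ^ (q.1 + 1) / ((q.1 : ℂ) + 1)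
    + (p ^ 2 * w ^ 2 * (ξ ^ 2) ^ q.2) ^ (q.1 + 1) / ((q.1 : ℂ) + 1))

private noncomputable def bb (p ξ w : ℂ) (j : ℕ) : ℂ :=
  (-1) ^ j * (-Complex.log (1 - w ^ 2 * (ξ ^ 2) ^ (j + 1))
    + -Complex.log (1 - p ^ 2 * w ^ 2 * (ξ ^ 2) ^ j))

private noncomputable def DD (p ξ w : ℂ) (m : ℕ) : ℂ :=
  if Even (m + 1) then
    2 * w ^ (m + 1) * (ξ ^ (m + 1) + p ^ (m + 1)) / (((m : ℂ) + 1) * (1 + ξ ^ (m + 1)))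
  else 0

private lemma neglog1 {z : ℂ} (hz : ‖z‖ < 1) :
    HasSum (fun k : ℕ => z ^ (k + 1) / ((k : ℂ) + 1)) (-Complex.log (1 - z)) := by
  have h := Complex.hasSum_taylorSeries_neg_log hz
  have h2 := (hasSum_nat_add_iff' (f := fun n : ℕ => z ^ n / (n : ℂ)) 1).mpr h
  simpa [Nat.cast_add] using h2

private lemma one_add_ne {z : ℂ} (hz : ‖z‖ < 1) : 1 + z ≠ 0 := by
  intro h0
  have : z = -1 := by linear_combination h0
  rw [this] at hz
  simp at hz

private lemma nlt {a b : ℂ} (ha : ‖a‖ < 1) (hb : ‖b‖ ≤ 1) : ‖a * b‖ < 1 := by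
  rw [norm_mul]
  calc ‖a‖ * ‖b‖ ≤ ‖a‖ * 1 := by gcongr
    _ = ‖a‖ := mul_one _
    _ < 1 := ha

private lemma summable_log {c x : ℂ} (hc : ‖c‖ < 1) (hx : ‖x‖ < 1) :
    Summable fun j : ℕ => Complex.log (1 - c * x ^ j) := by
  apply Summable.of_norm_bounded_eventually_nat (g := fun j => 3 / 2 * ‖c‖ * ‖x‖ ^ j)
    (((summable_geometric_of_lt_one (norm_nonneg x) hx).mul_left _))
  have ht : Filter.Tendsto (fun j : ℕ => ‖x‖ ^ j) Filter.atTop (nhds 0) :=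
    tendsto_pow_atTop_nhds_zero_of_lt_one (norm_nonneg x) hx
  filter_upwards [ht.eventually_le_const (by norm_num : (0:ℝ) < 1/2)] with j hj
  have hnorm : ‖c * x ^ j‖ ≤ 1 / 2 := by
    rw [norm_mul, norm_pow]
    calc ‖c‖ * ‖x‖ ^ j ≤ 1 * (1/2) :=
          mul_le_mul hc.le hj (by positivity) zero_le_one
      _ = 1/2 := one_mul _
  have := Complex.norm_log_one_add_half_le_self (z := -(c * x ^ j)) (by simpa using hnorm)
  rw [show (1 : ℂ) + -(c * x ^ j) = 1 - c * x ^ j by ring] at this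
  calc ‖Complex.log (1 - c * x ^ j)‖ ≤ 3/2 * ‖-(c * x ^ j)‖ := this
    _ ≤ 3/2 * ‖c‖ * ‖x‖ ^ j := by rw [norm_neg, norm_mul, norm_pow, mul_assoc]

private lemma exp_tsum_log {c x : ℂ} (hc : ‖c‖ < 1) (hx : ‖x‖ < 1) :
    Complex.exp (∑' j : ℕ, Complex.log (1 - c * x ^ j)) = poch c x := by
  have hne : ∀ j : ℕ, (1 : ℂ) - c * x ^ j ≠ 0 := by
    intro j
    have h : ‖c * x ^ j‖ < 1 := by
      rw [norm_mul, norm_pow]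
      calc ‖c‖ * ‖x‖ ^ j ≤ ‖c‖ * 1 := by
            gcongr; exact pow_le_one₀ (norm_nonneg x) hx.le
        _ < 1 := by simpa using hc
    intro h0; rw [sub_eq_zero] at h0; rw [← h0] at h; simp at h
  have h := Complex.cexp_tsum_eq_tprod (f := fun j => 1 - c * x ^ j)
    hne (summable_log hc hx)
  simpa [poch] using h

private lemma col_hasSum (p ξ w : ℂ) (hp : ‖p‖ < 1) (hξ : ‖ξ‖ < 1) (hw : ‖w‖ < 1) (j : ℕ) :
    HasSum (fun k => aa p ξ w (k, j)) (bb p ξ w j) := by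
  have hW : ‖w ^ 2‖ < 1 := by rw [norm_pow]; exact pow_lt_one₀ (norm_nonneg _) hw two_ne_zero
  have hX : ‖(ξ ^ 2 : ℂ)‖ ≤ 1 := by
    rw [norm_pow]; exact (pow_le_one₀ (norm_nonneg _) hξ.le)
  have h1 : ‖w ^ 2 * (ξ ^ 2) ^ (j + 1)‖ < 1 :=
    nlt hW (by rw [norm_pow (ξ ^ 2)]; exact pow_le_one₀ (norm_nonneg _) hX)
  have h2 : ‖p ^ 2 * w ^ 2 * (ξ ^ 2) ^ j‖ < 1 := by
    rw [mul_assoc]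
    have h3 : ‖w ^ 2 * (ξ ^ 2) ^ j‖ < 1 :=
      nlt hW (by rw [norm_pow (ξ ^ 2)]; exact pow_le_one₀ (norm_nonneg _) hX)
    rw [norm_mul]
    calc ‖(p^2 : ℂ)‖ * ‖w ^ 2 * (ξ ^ 2) ^ j‖ ≤ 1 * ‖w ^ 2 * (ξ ^ 2) ^ j‖ := by
          gcongr
          rw [norm_pow]; exact pow_le_one₀ (norm_nonneg _) hp.le
      _ = _ := one_mul _
      _ < 1 := h3
  exact ((neglog1 h1).add (neglog1 h2)).mul_left ((-1) ^ j)

private lemma row_hasSum (p ξ w : ℂ) (hξ : ‖ξ‖ < 1) (k : ℕ) :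
    HasSum (fun j => aa p ξ w (k, j)) (DD p ξ w (2 * k + 1)) := by
  have hr : ‖-(ξ ^ 2 : ℂ) ^ (k + 1)‖ < 1 := by
    rw [norm_neg, norm_pow, norm_pow]
    exact pow_lt_one₀ (by positivity) (pow_lt_one₀ (norm_nonneg _) hξ two_ne_zero)
      (Nat.succ_ne_zero k)
  have geo := (hasSum_geometric_of_norm_lt_one hr).mul_right
    ((w ^ 2) ^ (k + 1) * ((ξ ^ 2) ^ (k + 1) + (p ^ 2) ^ (k + 1)) / ((k : ℂ) + 1))
  have hfun : (fun j : ℕ => (-(ξ ^ 2 : ℂ) ^ (k + 1)) ^ j *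
      ((w ^ 2) ^ (k + 1) * ((ξ ^ 2) ^ (k + 1) + (p ^ 2) ^ (k + 1)) / ((k : ℂ) + 1)))
      = fun j => aa p ξ w (k, j) := by
    funext j; simp only [aa]; ring_nf
  rw [hfun] at geo
  convert geo using 1
  case e'_3 => rfl
  have hd1 : (1 : ℂ) - -(ξ ^ 2) ^ (k + 1) ≠ 0 := by
    intro h0
    have h1 : ‖-(ξ^2:ℂ)^(k+1)‖ = 1 := by
      have h2 : (-(ξ^2:ℂ)^(k+1)) = 1 := by linear_combination -h0
      rw [h2]; simp
    rw [h1] at hr; exact lt_irrefl _ hr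
  have hd2 : ((k : ℂ) + 1) ≠ 0 := Nat.cast_add_one_ne_zero k
  have hd3 : (1 : ℂ) + ξ ^ (2 * k + 1 + 1) ≠ 0 := by
    apply one_add_ne
    rw [norm_pow]; exact pow_lt_one₀ (norm_nonneg _) hξ (by omega)
  have h2k : (2 * (k : ℂ) + 1 + 1) ≠ 0 := by
    exact_mod_cast (Nat.cast_ne_zero (R := ℂ)).mpr (show 2 * k + 2 ≠ 0 by omega)
  simp only [DD, if_pos (by exact ⟨k+1, by ring⟩ : Even (2*k+1+1))]
  push_cast
  rw [show (1:ℂ) - -(ξ^2)^(k+1) = 1 + ξ^(2*k+1+1) by ring]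
  field_simp
  ring_nf

private lemma aa_summable (p ξ w : ℂ) (hp : ‖p‖ < 1) (hξ : ‖ξ‖ < 1) (hw : ‖w‖ < 1) :
    Summable (aa p ξ w) := by
  set c : ℝ := ‖(w : ℂ) ^ 2‖ with hc
  set d : ℝ := ‖(ξ : ℂ) ^ 2‖ with hd
  have hc1 : c < 1 := by rw [hc, norm_pow]; exact pow_lt_one₀ (norm_nonneg _) hw two_ne_zero
  have hd1 : d < 1 := by rw [hd, norm_pow]; exact pow_lt_one₀ (norm_nonneg _) hξ two_ne_zero
  have hc0 : 0 ≤ c := norm_nonneg _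
  have hd0 : 0 ≤ d := norm_nonneg _
  have hsum : Summable (fun q : ℕ × ℕ => 2 * (c ^ q.1 * d ^ q.2)) :=
    ((summable_geometric_of_lt_one hc0 hc1).mul_of_nonneg
      (summable_geometric_of_lt_one hd0 hd1)
      (fun _ => by positivity) (fun _ => by positivity)).mul_left 2
  apply Summable.of_norm_bounded hsum
  rintro ⟨k, j⟩
  have hk1 : (1 : ℝ) ≤ ‖((k : ℂ) + 1)‖ := by
    have h3 : ((k : ℂ) + 1) = ((k + 1 : ℕ) : ℂ) := by push_cast; ring
    rw [h3, Complex.norm_natCast]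
    exact_mod_cast Nat.one_le_iff_ne_zero.mpr (Nat.succ_ne_zero k)
  have key : ∀ z : ℂ, ‖z‖ ≤ c * d ^ j → ‖z ^ (k + 1) / ((k : ℂ) + 1)‖ ≤ c ^ k * d ^ j := by
    intro z hz
    rw [norm_div, norm_pow]
    have h1 : ‖z‖ ^ (k + 1) ≤ (c * d ^ j) ^ (k + 1) :=
      pow_le_pow_left₀ (norm_nonneg _) hz _
    have h2 : (c * d ^ j) ^ (k + 1) = c ^ (k + 1) * (d ^ j) ^ (k + 1) := mul_pow _ _ _
    have h3 : (d ^ j) ^ (k + 1) ≤ d ^ j :=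
      pow_le_of_le_one (by positivity) (pow_le_one₀ hd0 hd1.le) (Nat.succ_ne_zero k)
    have h4 : c ^ (k + 1) ≤ c ^ k := pow_le_pow_of_le_one hc0 hc1.le (Nat.le_succ k)
    calc ‖z‖ ^ (k + 1) / ‖((k : ℂ) + 1)‖ ≤ ‖z‖ ^ (k + 1) / 1 := by
          apply div_le_div_of_nonneg_left ?_ ?_ hk1 <;> positivity
      _ = ‖z‖ ^ (k + 1) := div_one _
      _ ≤ c ^ (k + 1) * (d ^ j) ^ (k + 1) := by rw [← h2]; exact h1
      _ ≤ c ^ k * d ^ j := by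
          apply mul_le_mul h4 h3 (by positivity) (by positivity)
  have hz1 : ‖w ^ 2 * (ξ ^ 2) ^ (j + 1)‖ ≤ c * d ^ j := by
    have e1 : ‖w ^ 2 * (ξ ^ 2) ^ (j + 1)‖ = c * d ^ (j + 1) := by
      rw [norm_mul, norm_pow (ξ ^ 2) (j + 1)]
    rw [e1, pow_succ]
    have hdj : (0:ℝ) ≤ d ^ j := by positivity
    nlinarith [mul_nonneg (mul_nonneg hc0 hdj) (sub_nonneg.mpr hd1.le)]
  have hz2 : ‖p ^ 2 * w ^ 2 * (ξ ^ 2) ^ j‖ ≤ c * d ^ j := by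
    have e2 : ‖p ^ 2 * w ^ 2 * (ξ ^ 2) ^ j‖ = ‖p ^ 2‖ * c * d ^ j := by
      rw [norm_mul, norm_mul, norm_pow (ξ ^ 2) j]
    have hp2 : ‖p ^ 2‖ ≤ 1 := by
      rw [norm_pow]; exact pow_le_one₀ (norm_nonneg _) hp.le
    have hp0 : (0:ℝ) ≤ ‖p ^ 2‖ := norm_nonneg _
    have hdj : (0:ℝ) ≤ d ^ j := by positivity
    rw [e2]
    nlinarith [mul_nonneg (mul_nonneg hc0 hdj) (sub_nonneg.mpr hp2)]
  calc ‖aa p ξ w (k, j)‖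
      = ‖(w ^ 2 * (ξ ^ 2) ^ (j + 1)) ^ (k + 1) / ((k : ℂ) + 1)
          + (p ^ 2 * w ^ 2 * (ξ ^ 2) ^ j) ^ (k + 1) / ((k : ℂ) + 1)‖ := by
        simp only [aa]
        rw [norm_mul, norm_pow, norm_neg, norm_one, one_pow, one_mul]
    _ ≤ ‖(w ^ 2 * (ξ ^ 2) ^ (j + 1)) ^ (k + 1) / ((k : ℂ) + 1)‖
          + ‖(p ^ 2 * w ^ 2 * (ξ ^ 2) ^ j) ^ (k + 1) / ((k : ℂ) + 1)‖ := norm_add_le _ _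
    _ ≤ c ^ k * d ^ j + c ^ k * d ^ j := add_le_add (key _ hz1) (key _ hz2)
    _ = 2 * (c ^ k * d ^ j) := by ring

private lemma Fdecomp (p ξ w : ℂ) (hξ : ‖ξ‖ < 1)
    (hne : ∀ m : ℕ, 1 - 2 * p ^ (m + 1) - ξ ^ (m + 1) ≠ 0) :
    (fun m : ℕ => w ^ (m + 1) / gam p ξ (m + 1))
      = fun m : ℕ => w ^ (m + 1) / ((m : ℂ) + 1) - DD p ξ w m := by
  funext m
  by_cases h : Even (m + 1)
  · simp only [gam, DD, if_pos h]
    have h1 : (1 : ℂ) + ξ ^ (m + 1) ≠ 0 := one_add_ne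
      (by rw [norm_pow]; exact pow_lt_one₀ (norm_nonneg _) hξ (Nat.succ_ne_zero m))
    have h2 := hne m
    have h3 : ((m : ℂ) + 1) ≠ 0 := Nat.cast_add_one_ne_zero m
    push_cast
    field_simp
    ring
  · simp only [gam, DD, if_neg h]
    push_cast
    ring

/-- The bosonic two-point function identity for level-1 `D^{(2)}_{n+1}`:
`exp(−∑_{m≥1} w^m/γ_m)
  = (1 − w)(ξ⁴w²;ξ⁴)_∞ (p²ξ²w²;ξ⁴)_∞ / ((ξ²w²;ξ⁴)_∞ (p²w²;ξ⁴)_∞)`. -/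
theorem boson_two_point_d2 (p ξ w : ℂ)
    (hp : ‖p‖ < 1) (hξ : ‖ξ‖ < 1) (hw : ‖w‖ < 1)
    (hne : ∀ m : ℕ, 1 - 2 * p ^ (m + 1) - ξ ^ (m + 1) ≠ 0) :
    Complex.exp (-∑' m : ℕ, w ^ (m + 1) / gam p ξ (m + 1))
      = (1 - w) * (poch (ξ ^ 4 * w ^ 2) (ξ ^ 4) * poch (p ^ 2 * ξ ^ 2 * w ^ 2) (ξ ^ 4))
        / (poch (ξ ^ 2 * w ^ 2) (ξ ^ 4) * poch (p ^ 2 * w ^ 2) (ξ ^ 4)) := by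
  -- norm facts
  have hW2 : ‖(w:ℂ) ^ 2‖ < 1 := by rw [norm_pow]; exact pow_lt_one₀ (norm_nonneg _) hw two_ne_zero
  have hX2 : ‖(ξ:ℂ) ^ 2‖ ≤ 1 := by rw [norm_pow]; exact pow_le_one₀ (norm_nonneg _) hξ.le
  have hP2 : ‖(p:ℂ) ^ 2‖ ≤ 1 := by rw [norm_pow]; exact pow_le_one₀ (norm_nonneg _) hp.le
  have hY : ‖(ξ:ℂ) ^ 4‖ < 1 := by
    rw [norm_pow]; exact pow_lt_one₀ (norm_nonneg _) hξ (by norm_num)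
  have hA : ‖ξ ^ 4 * w ^ 2‖ < 1 := nlt hY hW2.le
  have hC : ‖ξ ^ 2 * w ^ 2‖ < 1 := by
    rw [mul_comm]; exact nlt hW2 hX2
  have hB : ‖p ^ 2 * ξ ^ 2 * w ^ 2‖ < 1 := by
    rw [mul_assoc]
    calc ‖p ^ 2 * (ξ ^ 2 * w ^ 2)‖ ≤ ‖(p:ℂ)^2‖ * ‖ξ ^ 2 * w ^ 2‖ := norm_mul_le _ _
      _ ≤ 1 * ‖ξ ^ 2 * w ^ 2‖ := by gcongr
      _ = ‖ξ ^ 2 * w ^ 2‖ := one_mul _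
      _ < 1 := hC
  have hD : ‖p ^ 2 * w ^ 2‖ < 1 := by
    calc ‖p ^ 2 * w ^ 2‖ ≤ ‖(p:ℂ)^2‖ * ‖(w:ℂ)^2‖ := norm_mul_le _ _
      _ ≤ 1 * ‖(w:ℂ)^2‖ := by gcongr
      _ = ‖(w:ℂ)^2‖ := one_mul _
      _ < 1 := hW2
  have hw0 : (1 : ℂ) - w ≠ 0 := by
    intro h0; rw [sub_eq_zero] at h0; rw [← h0] at hw; simp at hw
  -- the double sum
  have ha := aa_summable p ξ w hp hξ hw
  set tA : ℂ := ∑' q : ℕ × ℕ, aa p ξ w q with htA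
  have hE : HasSum (fun k => DD p ξ w (2 * k + 1)) tA :=
    ha.hasSum.prod_fiberwise (fun k => row_hasSum p ξ w hξ k)
  -- sum of DD
  have hDe : HasSum (fun k => DD p ξ w (2 * k)) 0 := by
    have h0 : (fun k : ℕ => DD p ξ w (2 * k)) = fun _ => 0 := by
      funext k
      simp [DD, Nat.even_add_one, parity_simps]
    rw [h0]; exact hasSum_zero
  have hDD : HasSum (DD p ξ w) (0 + tA) := hDe.even_add_odd hE
  -- sum of the main series
  have hG : HasSum (fun m : ℕ => w ^ (m + 1) / ((m : ℂ) + 1)) (-Complex.log (1 - w)) :=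
    neglog1 hw
  have hF : HasSum (fun m : ℕ => w ^ (m + 1) / gam p ξ (m + 1))
      (-Complex.log (1 - w) - (0 + tA)) := by
    rw [Fdecomp p ξ w hξ hne]
    exact hG.sub hDD
  -- bb sums to tA as well
  have hswap : Summable (fun q : ℕ × ℕ => aa p ξ w q.swap) :=
    ((Equiv.prodComm ℕ ℕ).summable_iff).mpr ha
  have hb : HasSum (bb p ξ w) (∑' q : ℕ × ℕ, aa p ξ w q.swap) :=
    hswap.hasSum.prod_fiberwise (fun j => col_hasSum p ξ w hp hξ hw j)
  have hts : (∑' q : ℕ × ℕ, aa p ξ w q.swap) = tA := (Equiv.prodComm ℕ ℕ).tsum_eq (aa p ξ w)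
  rw [hts] at hb
  -- even/odd split of bb
  have hsA := summable_log hA hY
  have hsB := summable_log hB hY
  have hsC := summable_log hC hY
  have hsD := summable_log hD hY
  set LA : ℂ := ∑' i : ℕ, Complex.log (1 - ξ ^ 4 * w ^ 2 * (ξ ^ 4) ^ i) with hLA
  set LB : ℂ := ∑' i : ℕ, Complex.log (1 - p ^ 2 * ξ ^ 2 * w ^ 2 * (ξ ^ 4) ^ i) with hLB
  set LC : ℂ := ∑' i : ℕ, Complex.log (1 - ξ ^ 2 * w ^ 2 * (ξ ^ 4) ^ i) with hLC
  set LD : ℂ := ∑' i : ℕ, Complex.log (1 - p ^ 2 * w ^ 2 * (ξ ^ 4) ^ i) with hLD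
  have hbe : HasSum (fun i => bb p ξ w (2 * i)) (-LC + -LD) := by
    have hfe : (fun i : ℕ => bb p ξ w (2 * i))
        = fun i => -Complex.log (1 - ξ ^ 2 * w ^ 2 * (ξ ^ 4) ^ i)
          + -Complex.log (1 - p ^ 2 * w ^ 2 * (ξ ^ 4) ^ i) := by
      funext i
      simp only [bb]
      rw [show ((-1 : ℂ)) ^ (2 * i) = 1 by rw [pow_mul]; norm_num, one_mul]
      rw [show (1 : ℂ) - w ^ 2 * (ξ ^ 2) ^ (2 * i + 1) = 1 - ξ ^ 2 * w ^ 2 * (ξ ^ 4) ^ i by ring]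
      rw [show (1 : ℂ) - p ^ 2 * w ^ 2 * (ξ ^ 2) ^ (2 * i) = 1 - p ^ 2 * w ^ 2 * (ξ ^ 4) ^ i by
        ring]
    rw [hfe]
    exact hsC.hasSum.neg.add hsD.hasSum.neg
  have hbo : HasSum (fun i => bb p ξ w (2 * i + 1)) (LA + LB) := by
    have hfo : (fun i : ℕ => bb p ξ w (2 * i + 1))
        = fun i => Complex.log (1 - ξ ^ 4 * w ^ 2 * (ξ ^ 4) ^ i)
          + Complex.log (1 - p ^ 2 * ξ ^ 2 * w ^ 2 * (ξ ^ 4) ^ i) := by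
      funext i
      simp only [bb]
      rw [show ((-1 : ℂ)) ^ (2 * i + 1) = -1 by rw [pow_succ, pow_mul]; norm_num]
      rw [show (1 : ℂ) - w ^ 2 * (ξ ^ 2) ^ (2 * i + 1 + 1)
          = 1 - ξ ^ 4 * w ^ 2 * (ξ ^ 4) ^ i by ring]
      rw [show (1 : ℂ) - p ^ 2 * w ^ 2 * (ξ ^ 2) ^ (2 * i + 1)
          = 1 - p ^ 2 * ξ ^ 2 * w ^ 2 * (ξ ^ 4) ^ i by ring]
      ring
    rw [hfo]
    exact hsA.hasSum.add hsB.hasSum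
  have htA2 : tA = (-LC + -LD) + (LA + LB) := hb.unique (hbe.even_add_odd hbo)
  -- finish
  rw [hF.tsum_eq, htA2]
  rw [← exp_tsum_log hA hY, ← exp_tsum_log hB hY, ← exp_tsum_log hC hY, ← exp_tsum_log hD hY]
  rw [← hLA, ← hLB, ← hLC, ← hLD]
  rw [show -(-Complex.log (1 - w) - (0 + ((-LC + -LD) + (LA + LB))))
      = Complex.log (1 - w) + LA + LB - LC - LD by ring]
  rw [Complex.exp_sub, Complex.exp_sub, Complex.exp_add, Complex.exp_add,
    Complex.exp_log hw0]
  field_simp [Complex.exp_ne_zero]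
end

section
/- Fix n ≥ 1 and set h = 2n + 1, J = {−n, …, −1, 0, 1, …, n}. Order J by 1 ≻ 2 ≻ ⋯ ≻ n ≻ 0 ≻ −n ≻ −n+1 ≻ ⋯ ≻ −1. Define H₀(i,j) = 1 if (i ≺ j or (i,j) = (0,0)), and H₀(i,j) = 0 if (i ≻ j or (i = j ≠ 0)); and define l₀(j) = n+1−j for 1 ≤ j ≤ n, l₀(0) = 0, l₀(j) = −(n+1+j) for −n ≤ j ≤ −1. For (m,i), (m',j) ∈ ℤ × J set H((m,i),(m',j)) = m' − m + H₀(i,j) and l(m,j) = h·m + l₀(j). Then H((m,i),(m',j)) ≤ 0 implies l(m,i) ≥ l(m',j). -/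
/-- The grading `l₀` on the level-1 `A^{(2)}_{2n}` perfect crystal `J = {−n,…,n}`:
`l₀(j) = n+1−j` for `1 ≤ j ≤ n`, `l₀(0) = 0`, `l₀(j) = −(n+1+j)` for `−n ≤ j ≤ −1`. -/
def l0 (n : ℕ) (j : ℤ) : ℤ :=
  if 1 ≤ j then (n : ℤ) + 1 - j else if j = 0 then 0 else -((n : ℤ) + 1 + j)

/-- Condition (L) for level-1 `A^{(2)}_{2n}`: with `h = 2n+1`,
`H((m,i),(m',j)) = m' − m + H₀(i,j)` where `H₀(i,j) = 1` iff `i ≺ j` (equivalently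
`l₀(i) < l₀(j)`) or `i = j = 0`, and `l(m,j) = hm + l₀(j)`; then
`H((m,i),(m',j)) ≤ 0` implies `l(m,i) ≥ l(m',j)`. -/
theorem condition_L_a2even (n : ℕ) (hn : 1 ≤ n) (i j : ℤ)
    (hi : |i| ≤ (n : ℤ)) (hj : |j| ≤ (n : ℤ)) (m m' : ℤ)
    (hH : m' - m + (if l0 n i < l0 n j ∨ (i = 0 ∧ j = 0) then 1 else 0) ≤ 0) :
    (2 * (n : ℤ) + 1) * m + l0 n i ≥ (2 * (n : ℤ) + 1) * m' + l0 n j := by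
  have hli : |l0 n i| ≤ (n : ℤ) := by unfold l0; split_ifs <;> rw [abs_le] at * <;> omega
  have hlj : |l0 n j| ≤ (n : ℤ) := by unfold l0; split_ifs <;> rw [abs_le] at * <;> omega
  rw [abs_le] at hli hlj
  split_ifs at hH with h
  · nlinarith [hli.1, hlj.2, hH]
  · push_neg at h
    rcases h with ⟨h1, _⟩
    nlinarith [h1, hH]
end
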